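/- Let θ_2 = log 3/log 2, ψ and M as above, and d(u) = M(u)/u^{θ_2}. Then for every positive integer u, lim_{k→∞} d(2^k u) = d(u) − (3ψ(u−1) + ψ(u−2))/(5 u^{θ_2}). -/

import Mathlib

open Filter

/-- `ψ(q)`: number of `(m,n)` with `m ≥ n ≥ 0`, `C(m,n)` odd and `m + 2n = q`
(extended by `0` to negative `q`). -/
noncomputable def psi (q : ℤ) : ℕ :=
  {mn : ℕ × ℕ | mn.2 ≤ mn.1 ∧ (mn.1 : ℤ) + 2 * (mn.2 : ℤ) = q ∧
    ¬ 2 ∣ Nat.choose mn.1 mn.2}.ncard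

/-- `M(u) = Σ_{0 ≤ q < u} ψ(q)`. -/
noncomputable def Mfun (u : ℕ) : ℕ := ∑ q ∈ Finset.range u, psi (q : ℤ)

/-- `θ₂ = log 3 / log 2`. -/
noncomputable def theta2 : ℝ := Real.log 3 / Real.log 2

/-- `d(u) = M(u)/u^{θ₂}`. -/
noncomputable def dfun (u : ℕ) : ℝ := (Mfun u : ℝ) / (u : ℝ) ^ theta2

/-!
Lucas's theorem gives `C(2m + a, 2n + b) ≡ C(a, b) C(m, n) (mod 2)`, hence `ψ(2q) = ψ(q)` and
`ψ(2q + 1) = ψ(q) + ψ(q - 1)`, and summing, `M(2u) = 3 M(u) - ψ(u - 1)`. Since `2 ^ θ₂ = 3`,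
these recursions make `d(v) - c(v)` invariant under `v ↦ 2v`, where
`c(v) = (3ψ(v-1) + ψ(v-2)) / (5 v ^ θ₂)`.
Finally `ψ(q) ≤ q + 1` and `θ₂ > 1` give `c(v) = O(v ^ (1 - θ₂)) → 0`.
-/

open Topology

def psiSet (q : ℤ) : Set (ℕ × ℕ) :=
  {mn | (mn.1 : ℤ) + 2 * mn.2 = q ∧ ¬ 2 ∣ mn.1.choose mn.2}

lemma psi_eq_ncard_psiSet (q : ℤ) : psi q = (psiSet q).ncard := by
  -- `C(m, n) = 0` is even for `n > m`, so `n ≤ m` is implied by the parity condition.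
  refine congrArg Set.ncard <|
    Set.ext fun mn => ⟨fun h => ⟨h.2.1, h.2.2⟩, fun h => ⟨?_, h⟩⟩
  by_contra hlt
  exact h.2 (by rw [Nat.choose_eq_zero_of_lt (not_le.mp hlt)]; exact dvd_zero 2)

lemma psiSet_finite (q : ℤ) : (psiSet q).Finite :=
  (Set.finite_Iic (q.toNat, q.toNat)).subset fun mn h => by
    simp only [Set.mem_Iic, Prod.le_def]
    have := h.1
    omega

lemma two_dvd_choose_iff (n k : ℕ) :
    2 ∣ n.choose k ↔ 2 ∣ (n % 2).choose (k % 2) ∨ 2 ∣ (n / 2).choose (k / 2) := by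
  rw [Nat.dvd_iff_mod_eq_zero, Choose.choose_modEq_choose_mod_mul_choose_div_nat,
    ← Nat.dvd_iff_mod_eq_zero, Nat.prime_two.dvd_mul]

lemma not_two_dvd_choose_bit_iff {a b : ℕ} (ha : a < 2) (hb : b < 2) (m n : ℕ) :
    ¬ 2 ∣ (2 * m + a).choose (2 * n + b) ↔ ¬ 2 ∣ a.choose b ∧ ¬ 2 ∣ m.choose n := by
  rw [two_dvd_choose_iff, not_or]
  have hm : (2 * m + a) % 2 = a ∧ (2 * m + a) / 2 = m := by omega
  have hn : (2 * n + b) % 2 = b ∧ (2 * n + b) / 2 = n := by omega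
  rw [hm.1, hm.2, hn.1, hn.2]

def bitPair (a b : ℕ) : ℕ × ℕ → ℕ × ℕ := Prod.map (2 * · + a) (2 * · + b)

lemma bitPair_injective (a b : ℕ) : Function.Injective (bitPair a b) :=
  ((add_left_injective a).comp (mul_right_injective₀ two_ne_zero)).prodMap
    ((add_left_injective b).comp (mul_right_injective₀ two_ne_zero))

lemma exists_bitPair_eq (p : ℕ × ℕ) : ∃ a b p', a < 2 ∧ b < 2 ∧ p = bitPair a b p' :=
  ⟨p.1 % 2, p.2 % 2, (p.1 / 2, p.2 / 2), Nat.mod_lt _ two_pos, Nat.mod_lt _ two_pos,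
    Prod.ext (Nat.div_add_mod _ 2).symm (Nat.div_add_mod _ 2).symm⟩

lemma mem_psiSet_bitPair_iff {a b : ℕ} (ha : a < 2) (hb : b < 2) (p : ℕ × ℕ) (r : ℤ) :
    bitPair a b p ∈ psiSet r ↔
      2 * ((p.1 : ℤ) + 2 * p.2) + a + 2 * b = r ∧
        ¬ 2 ∣ a.choose b ∧ ¬ 2 ∣ p.1.choose p.2 := by
  change _ ∧ ¬ 2 ∣ (2 * p.1 + a).choose (2 * p.2 + b) ↔ _
  rw [not_two_dvd_choose_bit_iff ha hb]
  simp only [bitPair, Prod.map_fst, Prod.map_snd]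
  push_cast
  constructor <;> rintro ⟨h, h'⟩ <;> exact ⟨by linarith, h'⟩

lemma psi_of_neg {q : ℤ} (hq : q < 0) : psi q = 0 := by
  rw [psi_eq_ncard_psiSet, Set.ncard_eq_zero (psiSet_finite q)]
  exact Set.eq_empty_of_forall_notMem fun mn h => by have := h.1; omega

lemma psi_two_mul (q : ℤ) : psi (2 * q) = psi q := by
  have himage : psiSet (2 * q) = bitPair 0 0 '' psiSet q := by
    ext p
    constructor
    · intro hp
      obtain ⟨a, b, p, ha, hb, rfl⟩ := exists_bitPair_eq p
      obtain ⟨hsum, hab, hodd⟩ := (mem_psiSet_bitPair_iff ha hb p _).1 hp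
      obtain rfl : a = 0 := by omega
      interval_cases b
      · exact ⟨p, ⟨by omega, hodd⟩, rfl⟩
      · exact absurd (by decide) hab
    · rintro ⟨p, ⟨hsum, hodd⟩, rfl⟩
      exact (mem_psiSet_bitPair_iff two_pos two_pos p _).2
        ⟨by push_cast; omega, by decide, hodd⟩
  rw [psi_eq_ncard_psiSet, psi_eq_ncard_psiSet, himage,
    Set.ncard_image_of_injective _ (bitPair_injective 0 0)]

lemma psi_two_mul_add_one (q : ℤ) : psi (2 * q + 1) = psi q + psi (q - 1) := by
  have himage : psiSet (2 * q + 1) = bitPair 1 0 '' psiSet q ∪ bitPair 1 1 '' psiSet (q - 1) := by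
    ext p
    constructor
    · intro hp
      obtain ⟨a, b, p, ha, hb, rfl⟩ := exists_bitPair_eq p
      obtain ⟨hsum, -, hodd⟩ := (mem_psiSet_bitPair_iff ha hb p _).1 hp
      obtain rfl : a = 1 := by omega
      interval_cases b
      · exact Or.inl ⟨p, ⟨by omega, hodd⟩, rfl⟩
      · exact Or.inr ⟨p, ⟨by omega, hodd⟩, rfl⟩
    · rintro (⟨p, ⟨hsum, hodd⟩, rfl⟩ | ⟨p, ⟨hsum, hodd⟩, rfl⟩)
      · exact (mem_psiSet_bitPair_iff one_lt_two two_pos p _).2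
          ⟨by push_cast; omega, by decide, hodd⟩
      · exact (mem_psiSet_bitPair_iff one_lt_two one_lt_two p _).2
          ⟨by push_cast; omega, by decide, hodd⟩
  have hdisj : Disjoint (bitPair 1 0 '' psiSet q) (bitPair 1 1 '' psiSet (q - 1)) := by
    rw [Set.disjoint_left]
    rintro _ ⟨p, -, rfl⟩ ⟨p', -, h⟩
    simp only [bitPair, Prod.map, Prod.ext_iff] at h
    omega
  rw [psi_eq_ncard_psiSet, psi_eq_ncard_psiSet, psi_eq_ncard_psiSet, himage,
    Set.ncard_union_eq hdisj ((psiSet_finite _).image _) ((psiSet_finite _).image _),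
    Set.ncard_image_of_injective _ (bitPair_injective 1 0),
    Set.ncard_image_of_injective _ (bitPair_injective 1 1)]

lemma psi_le_toNat_add_one (q : ℤ) : psi q ≤ q.toNat + 1 := by
  rw [psi_eq_ncard_psiSet, ← Finset.card_range (q.toNat + 1), ← Set.ncard_coe_finset]
  refine Set.ncard_le_ncard_of_injOn Prod.snd (fun p hp => ?_) (fun p hp p' hp' h => ?_)
  · have := hp.1
    simp only [Finset.coe_range, Set.mem_Iio]
    omega
  · have := hp.1
    have := hp'.1
    exact Prod.ext (by omega) h

lemma Mfun_two_mul (u : ℕ) : Mfun (2 * u) + psi ((u : ℤ) - 1) = 3 * Mfun u := by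
  induction u with
  | zero => simp [Mfun, psi_of_neg]
  | succ u ih =>
    have hodd := psi_two_mul_add_one u
    have heven := psi_two_mul u
    rw [show 2 * (u + 1) = 2 * u + 1 + 1 by ring]
    simp only [Mfun, Finset.sum_range_succ] at ih ⊢
    push_cast at hodd heven ⊢
    rw [add_sub_cancel_right]
    omega

lemma two_rpow_theta2 : (2 : ℝ) ^ theta2 = 3 :=
  Real.rpow_logb (by norm_num) (by norm_num) (by norm_num)

lemma one_lt_theta2 : 1 < theta2 :=
  (Real.lt_logb_iff_rpow_lt one_lt_two (by norm_num)).2 (by norm_num)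

lemma natCast_two_mul_rpow_theta2 (v : ℕ) :
    ((2 * v : ℕ) : ℝ) ^ theta2 = 3 * (v : ℝ) ^ theta2 := by
  rw [Nat.cast_mul, Nat.cast_ofNat, Real.mul_rpow zero_le_two (Nat.cast_nonneg v), two_rpow_theta2]

noncomputable def dfunCorrection (v : ℕ) : ℝ :=
  (3 * (psi ((v : ℤ) - 1) : ℝ) + (psi ((v : ℤ) - 2) : ℝ)) / (5 * (v : ℝ) ^ theta2)

lemma dfun_sub_dfunCorrection_two_mul {v : ℕ} (hv : 0 < v) :
    dfun (2 * v) - dfunCorrection (2 * v) = dfun v - dfunCorrection v := by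
  have hM : (Mfun (2 * v) : ℝ) = 3 * Mfun v - psi ((v : ℤ) - 1) := by
    rw [eq_sub_iff_add_eq]
    exact_mod_cast Mfun_two_mul v
  have hodd : psi (((2 * v : ℕ) : ℤ) - 1) = psi ((v : ℤ) - 1) + psi ((v : ℤ) - 2) := by
    rw [show ((2 * v : ℕ) : ℤ) - 1 = 2 * ((v : ℤ) - 1) + 1 by push_cast; ring,
      psi_two_mul_add_one, sub_sub]
    norm_num
  have heven : psi (((2 * v : ℕ) : ℤ) - 2) = psi ((v : ℤ) - 1) := by
    rw [show ((2 * v : ℕ) : ℤ) - 2 = 2 * ((v : ℤ) - 1) by push_cast; ring, psi_two_mul]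
  have hpos : (0 : ℝ) < (v : ℝ) ^ theta2 := by positivity
  simp only [dfun, dfunCorrection, hM, hodd, heven, natCast_two_mul_rpow_theta2]
  field_simp
  push_cast
  ring

lemma dfun_sub_dfunCorrection_two_pow_mul {u : ℕ} (hu : 0 < u) (k : ℕ) :
    dfun (2 ^ k * u) - dfunCorrection (2 ^ k * u) = dfun u - dfunCorrection u := by
  induction k with
  | zero => simp
  | succ k ih => rw [pow_succ', mul_assoc, dfun_sub_dfunCorrection_two_mul (by positivity), ih]

lemma dfunCorrection_le {v : ℕ} (hv : 0 < v) : dfunCorrection v ≤ (v : ℝ) ^ (1 - theta2) := by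
  have hv' : (0 : ℝ) < v := by exact_mod_cast hv
  have hpos : (0 : ℝ) < (v : ℝ) ^ theta2 := by positivity
  have h1 : (psi ((v : ℤ) - 1) : ℝ) ≤ v := by
    have := psi_le_toNat_add_one ((v : ℤ) - 1)
    exact_mod_cast (by omega : psi ((v : ℤ) - 1) ≤ v)
  have h2 : (psi ((v : ℤ) - 2) : ℝ) ≤ v := by
    have := psi_le_toNat_add_one ((v : ℤ) - 2)
    exact_mod_cast (by omega : psi ((v : ℤ) - 2) ≤ v)
  rw [Real.rpow_sub hv', Real.rpow_one, dfunCorrection, div_le_div_iff₀ (by positivity) hpos]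
  nlinarith

lemma tendsto_dfunCorrection_atTop : Tendsto dfunCorrection atTop (𝓝 0) := by
  have hpow : Tendsto (fun v : ℕ => (v : ℝ) ^ (1 - theta2)) atTop (𝓝 0) := by
    have := (tendsto_rpow_neg_atTop (sub_pos.2 one_lt_theta2)).comp tendsto_natCast_atTop_atTop
    simpa only [neg_sub, Function.comp_def] using this
  refine squeeze_zero' (Eventually.of_forall fun v => ?_) ?_ hpow
  · unfold dfunCorrection
    positivity
  · filter_upwards [eventually_gt_atTop 0] with v hv using dfunCorrection_le hv

lemma tendsto_two_pow_mul_atTop {u : ℕ} (hu : 0 < u) :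
    Tendsto (fun k : ℕ => 2 ^ k * u) atTop atTop :=
  tendsto_atTop_mono (fun _ => Nat.le_mul_of_pos_right _ hu)
    (tendsto_pow_atTop_atTop_of_one_lt one_lt_two)

theorem dfun_tendsto (u : ℕ) (hu : 0 < u) :
    Tendsto (fun k : ℕ => dfun (2 ^ k * u)) atTop
      (nhds (dfun u -
        (3 * (psi ((u : ℤ) - 1) : ℝ) + (psi ((u : ℤ) - 2) : ℝ)) / (5 * (u : ℝ) ^ theta2))) := by
  have h := (tendsto_dfunCorrection_atTop.comp (tendsto_two_pow_mul_atTop hu)).const_add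
    (dfun u - dfunCorrection u)
  rw [add_zero] at h
  refine h.congr fun _ => ?_
  rw [Function.comp_apply, ← dfun_sub_dfunCorrection_two_pow_mul hu, sub_add_cancel]
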